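/- arXiv:quant-ph/0011066 — 6 statements merged into one kernel-verified Lean document; each statement's English description precedes it below -/
import Mathlib

section
/- Let ρ be a positive semidefinite operator on a finite-dimensional Hilbert space and |ψ⟩ a nonzero vector in the range of ρ. Then the maximal λ ≥ 0 such that ρ − λ|ψ⟩⟨ψ| ≥ 0 equals 1/⟨ψ|ρ⁻¹|ψ⟩, where ρ⁻¹ denotes the Moore–Penrose pseudoinverse of ρ (equivalently, ⟨ψ|ρ⁻¹|ψ⟩ := ⟨φ|ψ⟩ for any φ with ρφ = ψ). -/
open Matrix ComplexOrder

noncomputable section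

open scoped MatrixOrder in
/-- Cauchy–Schwarz for the semi-inner product induced by a PSD matrix. -/
lemma cs_aux {n : Type*} [Fintype n] [DecidableEq n]
    (ρ : Matrix n n ℂ) (hρ : ρ.PosSemidef) (a b : n → ℂ) :
    ‖star (ρ *ᵥ a) ⬝ᵥ b‖ ^ 2 ≤
      (star a ⬝ᵥ (ρ *ᵥ a)).re * (star b ⬝ᵥ (ρ *ᵥ b)).re := by
  set S := CFC.sqrt ρ with hSdef
  have hSH : Sᴴ = S := (CFC.sqrt_nonneg ρ).posSemidef.1
  have hSS : S * S = ρ := CFC.sqrt_mul_sqrt_self ρ hρ.nonneg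
  have hmul : ∀ x : n → ℂ, ρ *ᵥ x = S *ᵥ (S *ᵥ x) := by
    intro x; rw [mulVec_mulVec, hSS]
  have key : ∀ x y : n → ℂ, star (S *ᵥ x) ⬝ᵥ y = star x ⬝ᵥ (S *ᵥ y) := by
    intro x y
    rw [star_mulVec, hSH, ← dotProduct_mulVec]
  set u := S *ᵥ a with hu
  set v := S *ᵥ b with hv
  have h1 : star (ρ *ᵥ a) ⬝ᵥ b = star u ⬝ᵥ v := by
    rw [hmul, key, hu, hv]
  have h2 : star a ⬝ᵥ (ρ *ᵥ a) = star u ⬝ᵥ u := by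
    rw [hmul, ← key]
  have h3 : star b ⬝ᵥ (ρ *ᵥ b) = star v ⬝ᵥ v := by
    rw [hmul, ← key]
  rw [h1, h2, h3]
  -- Cauchy–Schwarz in EuclideanSpace
  set U : EuclideanSpace ℂ n := (WithLp.equiv 2 (n → ℂ)).symm u
  set V : EuclideanSpace ℂ n := (WithLp.equiv 2 (n → ℂ)).symm v
  have hUV : (inner ℂ U V : ℂ) = star u ⬝ᵥ v := by rw [dotProduct_comm]; rfl
  have hUU : (inner ℂ U U : ℂ) = star u ⬝ᵥ u := by rw [dotProduct_comm]; rfl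
  have hVV : (inner ℂ V V : ℂ) = star v ⬝ᵥ v := by rw [dotProduct_comm]; rfl
  have hCS : ‖(inner ℂ U V : ℂ)‖ ≤ ‖U‖ * ‖V‖ := norm_inner_le_norm (𝕜 := ℂ) U V
  have hnU : ‖U‖ ^ 2 = (star u ⬝ᵥ u).re := by
    rw [InnerProductSpace.norm_sq_eq_re_inner (𝕜 := ℂ) U, hUU, RCLike.re_to_complex]
  have hnV : ‖V‖ ^ 2 = (star v ⬝ᵥ v).re := by
    rw [InnerProductSpace.norm_sq_eq_re_inner (𝕜 := ℂ) V, hVV, RCLike.re_to_complex]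
  calc ‖star u ⬝ᵥ v‖ ^ 2 = ‖(inner ℂ U V : ℂ)‖ ^ 2 := by rw [hUV]
    _ ≤ (‖U‖ * ‖V‖) ^ 2 := by
        apply pow_le_pow_left₀ (norm_nonneg _) hCS
    _ = ‖U‖ ^ 2 * ‖V‖ ^ 2 := by ring
    _ = (star u ⬝ᵥ u).re * (star v ⬝ᵥ v).re := by rw [hnU, hnV]

/-- The rank-one operator `|ψ⟩⟨ψ|` as a matrix. -/
def outer {n : Type*} [Fintype n] (ψ : n → ℂ) : Matrix n n ℂ :=
  Matrix.vecMulVec ψ (star ψ)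

lemma outer_mulVec {n : Type*} [Fintype n] (ψ x : n → ℂ) :
    outer ψ *ᵥ x = (star ψ ⬝ᵥ x) • ψ := by
  ext i
  simp [outer, vecMulVec, mulVec, dotProduct, Finset.mul_sum, mul_comm, mul_left_comm]

lemma outer_herm {n : Type*} [Fintype n] (ψ : n → ℂ) : (outer ψ)ᴴ = outer ψ := by
  ext i j
  simp [outer, vecMulVec, conjTranspose_apply, mul_comm]

/-- If `ψ` is a nonzero vector in the range of the positive semidefinite operator `ρ`,
say `ψ = ρ φ`, then the maximal `λ ≥ 0` with `ρ - λ|ψ⟩⟨ψ| ≥ 0` is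
`1/⟨ψ|ρ⁻¹|ψ⟩ = 1/⟨ψ|φ⟩` (the pseudoinverse expression is independent of the choice of `φ`). -/
theorem stmt1 {n : Type*} [Fintype n] [DecidableEq n]
    (ρ : Matrix n n ℂ) (hρ : ρ.PosSemidef)
    (ψ φ : n → ℂ) (hψ : ψ ≠ 0) (hφ : ρ *ᵥ φ = ψ) :
    IsGreatest {l : ℝ | 0 ≤ l ∧ (ρ - (l : ℂ) • outer ψ).PosSemidef}
      (1 / (star ψ ⬝ᵥ φ).re) := by
  set c := (star ψ ⬝ᵥ φ).re with hc
  have hQ : 0 ≤ star φ ⬝ᵥ (ρ *ᵥ φ) := hρ.dotProduct_mulVec_nonneg φ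
  have hkey : star ψ ⬝ᵥ φ = star φ ⬝ᵥ (ρ *ᵥ φ) := by
    rw [← hφ, star_mulVec, hρ.1, ← dotProduct_mulVec]
  have h0 : 0 ≤ star ψ ⬝ᵥ φ := hkey ▸ hQ
  have hψφ : star ψ ⬝ᵥ φ = (c : ℂ) := by
    have him := (Complex.nonneg_iff.mp h0).2
    exact Complex.ext (by simp [hc]) (by simp [him])
  have hc0 : 0 ≤ c := (Complex.nonneg_iff.mp h0).1
  have hφψ : star φ ⬝ᵥ ψ = (c : ℂ) := by
    rw [star_dotProduct, hψφ]
    exact Complex.conj_ofReal c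
  have hcpos : 0 < c := by
    rcases hc0.lt_or_eq with h | h
    · exact h
    · exfalso
      have hcs := cs_aux ρ hρ φ ψ
      rw [hφ, hφψ] at hcs
      simp only [Complex.ofReal_re, ← h, zero_mul] at hcs
      have h1 : ‖star ψ ⬝ᵥ ψ‖ ^ 2 = 0 := le_antisymm hcs (by positivity)
      have h2 : star ψ ⬝ᵥ ψ = 0 := norm_eq_zero.mp (by
        have := pow_eq_zero_iff (n := 2) (by norm_num) |>.mp h1
        exact this)
      exact hψ (dotProduct_star_self_eq_zero.mp h2)
  constructor
  · -- membership
    refine ⟨by positivity, ?_⟩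
    refine Matrix.PosSemidef.of_dotProduct_mulVec_nonneg ?_ ?_
    · -- Hermitian
      rw [IsHermitian, conjTranspose_sub, conjTranspose_smul, outer_herm, hρ.1]
      congr 1
      simp [Complex.ext_iff]
    · intro x
      have hcs := cs_aux ρ hρ φ x
      rw [hφ, hφψ] at hcs
      simp only [Complex.ofReal_re] at hcs
      set z := star ψ ⬝ᵥ x with hz
      have hform : star x ⬝ᵥ ((ρ - ((1/c : ℝ) : ℂ) • outer ψ) *ᵥ x)
          = star x ⬝ᵥ (ρ *ᵥ x) - ((1/c : ℝ) : ℂ) * (star x ⬝ᵥ ψ * z) := by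
        rw [sub_mulVec, smul_mulVec, outer_mulVec, dotProduct_sub, dotProduct_smul]
        simp [smul_eq_mul, dotProduct_smul, mul_assoc, mul_comm]
        exact Or.inl (Or.inl hz.symm)
      have hconj : star x ⬝ᵥ ψ = star z := by
        rw [hz, star_dotProduct]
      have hQx : 0 ≤ star x ⬝ᵥ (ρ *ᵥ x) := hρ.dotProduct_mulVec_nonneg x
      have hQxr : star x ⬝ᵥ (ρ *ᵥ x) = ((star x ⬝ᵥ (ρ *ᵥ x)).re : ℂ) :=
        Complex.ext rfl (by simp [(Complex.nonneg_iff.mp hQx).2])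
      rw [hform, hconj]
      have hzz : star z * z = ((‖z‖ ^ 2 : ℝ) : ℂ) := by
        rw [Complex.star_def, mul_comm, Complex.mul_conj']
        norm_cast
      rw [hzz]
      have hle : (1/c) * ‖z‖ ^ 2 ≤ (star x ⬝ᵥ (ρ *ᵥ x)).re := by
        rw [div_mul_eq_mul_div, one_mul, div_le_iff₀ hcpos]
        calc ‖z‖ ^ 2 ≤ c * (star x ⬝ᵥ (ρ *ᵥ x)).re := hcs
          _ = (star x ⬝ᵥ (ρ *ᵥ x)).re * c := mul_comm _ _
      rw [hQxr, Complex.nonneg_iff]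
      constructor
      · simp only [Complex.sub_re, Complex.ofReal_re, Complex.mul_re, Complex.ofReal_im,
          zero_mul, sub_zero, mul_zero]
        nlinarith [hle]
      · simp only [Complex.sub_im, Complex.mul_im, Complex.ofReal_im, Complex.ofReal_re,
          zero_mul, mul_zero, add_zero, sub_zero]
  · -- upper bound
    rintro l ⟨hl0, hlps⟩
    have h := hlps.dotProduct_mulVec_nonneg φ
    have hform : star φ ⬝ᵥ ((ρ - (l : ℂ) • outer ψ) *ᵥ φ)
        = ((c : ℂ) - (l : ℂ) * ((c : ℂ) * (c : ℂ))) := by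
      rw [sub_mulVec, smul_mulVec, outer_mulVec, dotProduct_sub, dotProduct_smul,
        dotProduct_smul, hψφ, hφψ, ← hkey, hψφ]
      simp [smul_eq_mul]
    rw [hform] at h
    have hre : 0 ≤ c - l * (c * c) := by
      have := (Complex.nonneg_iff.mp h).1
      simpa using this
    rw [le_div_iff₀ hcpos]
    nlinarith [hcpos]
end
end

section
/- Let ρ be a positive definite operator on a finite-dimensional Hilbert space and |ψ₁⟩, |ψ₂⟩ unit vectors with ⟨ψ₁|ρ⁻¹|ψ₂⟩ = 0. Then the pair Λ₁ = 1/⟨ψ₁|ρ⁻¹|ψ₁⟩, Λ₂ = 1/⟨ψ₂|ρ⁻¹|ψ₂⟩ satisfies ρ − Λ₁|ψ₁⟩⟨ψ₁| − Λ₂|ψ₂⟩⟨ψ₂| ≥ 0. -/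
open Matrix ComplexOrder

noncomputable section

lemma herm_symm {n : Type*} [Fintype n] {A : Matrix n n ℂ} (hA : A.IsHermitian)
    (u v : n → ℂ) : star u ⬝ᵥ (A *ᵥ v) = star (star v ⬝ᵥ (A *ᵥ u)) := by
  rw [star_dotProduct, star_mulVec, hA.eq, ← dotProduct_mulVec]

/-- If `ρ` is positive definite and `ψ₁, ψ₂` are unit vectors with `⟨ψ₁|ρ⁻¹|ψ₂⟩ = 0`,
then with `Λᵢ = 1/⟨ψᵢ|ρ⁻¹|ψᵢ⟩` the operator `ρ - Λ₁|ψ₁⟩⟨ψ₁| - Λ₂|ψ₂⟩⟨ψ₂|` is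
positive semidefinite. -/
theorem stmt2 {n : Type*} [Fintype n] [DecidableEq n]
    (ρ : Matrix n n ℂ) (hρ : ρ.PosDef)
    (ψ₁ ψ₂ : n → ℂ) (hψ₁ : star ψ₁ ⬝ᵥ ψ₁ = 1) (hψ₂ : star ψ₂ ⬝ᵥ ψ₂ = 1)
    (horth : star ψ₁ ⬝ᵥ (ρ⁻¹ *ᵥ ψ₂) = 0) :
    (ρ - ((1 / (star ψ₁ ⬝ᵥ (ρ⁻¹ *ᵥ ψ₁)).re : ℝ) : ℂ) • outer ψ₁
       - ((1 / (star ψ₂ ⬝ᵥ (ρ⁻¹ *ᵥ ψ₂)).re : ℝ) : ℂ) • outer ψ₂).PosSemidef := by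
  set A := ρ⁻¹ with hAdef
  have hA : A.PosDef := hρ.inv
  have hAH : A.IsHermitian := hA.isHermitian
  -- nonzero vectors
  have hne₁ : ψ₁ ≠ 0 := by
    intro h; rw [h] at hψ₁; simp at hψ₁
  have hne₂ : ψ₂ ≠ 0 := by
    intro h; rw [h] at hψ₂; simp at hψ₂
  set a₁ := star ψ₁ ⬝ᵥ (A *ᵥ ψ₁) with ha₁def
  set a₂ := star ψ₂ ⬝ᵥ (A *ᵥ ψ₂) with ha₂def
  have ha₁pos : 0 < a₁ := hA.dotProduct_mulVec_pos hne₁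
  have ha₂pos : 0 < a₂ := hA.dotProduct_mulVec_pos hne₂
  have ha₁re : (a₁.re : ℂ) = a₁ := Complex.conj_eq_iff_re.mp (by
    rw [← Complex.star_def, ← herm_symm hAH])
  have ha₂re : (a₂.re : ℂ) = a₂ := Complex.conj_eq_iff_re.mp (by
    rw [← Complex.star_def, ← herm_symm hAH])
  have ha₁ne : a₁ ≠ 0 := ne_of_gt ha₁pos
  have ha₂ne : a₂ ≠ 0 := ne_of_gt ha₂pos
  have horth' : star ψ₂ ⬝ᵥ (A *ᵥ ψ₁) = 0 := by
    rw [herm_symm hAH, horth, star_zero]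
  have hAρ : ∀ x : n → ℂ, A *ᵥ (ρ *ᵥ x) = x := by
    intro x
    rw [mulVec_mulVec, hAdef, Matrix.nonsing_inv_mul ρ (isUnit_iff_isUnit_det ρ |>.mp hρ.isUnit),
      one_mulVec]
  refine posSemidef_iff_dotProduct_mulVec.mpr ⟨?_, ?_⟩
  · -- Hermitian
    have houter : ∀ ψ : n → ℂ, (outer ψ).IsHermitian := by
      intro ψ
      ext i j
      simp [outer, conjTranspose_apply, vecMulVec_apply, mul_comm]
    unfold Matrix.IsHermitian
    simp only [conjTranspose_sub, conjTranspose_smul, hρ.isHermitian.eq,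
      (houter ψ₁).eq, (houter ψ₂).eq, Complex.star_def, Complex.conj_ofReal]
  · intro x
    set c₁ := star ψ₁ ⬝ᵥ x with hc₁def
    set c₂ := star ψ₂ ⬝ᵥ x with hc₂def
    set z := ρ *ᵥ x - (c₁/a₁) • ψ₁ - (c₂/a₂) • ψ₂ with hzdef
    have hB := hA.posSemidef.dotProduct_mulVec_nonneg z
    have hy1 : star ψ₁ ⬝ᵥ (A *ᵥ (ρ *ᵥ x)) = c₁ := by rw [hAρ]
    have hy2 : star ψ₂ ⬝ᵥ (A *ᵥ (ρ *ᵥ x)) = c₂ := by rw [hAρ]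
    have hy1' : star (ρ *ᵥ x) ⬝ᵥ (A *ᵥ ψ₁) = star c₁ := by
      rw [herm_symm hAH, hy1]
    have hy2' : star (ρ *ᵥ x) ⬝ᵥ (A *ᵥ ψ₂) = star c₂ := by
      rw [herm_symm hAH, hy2]
    have hyy : star (ρ *ᵥ x) ⬝ᵥ (A *ᵥ (ρ *ᵥ x)) = star x ⬝ᵥ (ρ *ᵥ x) := by
      rw [hAρ, star_mulVec, hρ.isHermitian.eq, ← dotProduct_mulVec]
    have hc₁' : star x ⬝ᵥ ψ₁ = star c₁ := by rw [star_dotProduct]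
    have hc₂' : star x ⬝ᵥ ψ₂ = star c₂ := by rw [star_dotProduct]
    have hΛ₁ : ((1/a₁.re : ℝ) : ℂ) = 1/a₁ := by push_cast; rw [ha₁re]
    have hΛ₂ : ((1/a₂.re : ℝ) : ℂ) = 1/a₂ := by push_cast; rw [ha₂re]
    have hsa₁ : star a₁ = a₁ := by
      rw [← ha₁re, Complex.star_def, Complex.conj_ofReal]
    have hsa₂ : star a₂ = a₂ := by
      rw [← ha₂re, Complex.star_def, Complex.conj_ofReal]
    have key : star z ⬝ᵥ (A *ᵥ z)
        = star x ⬝ᵥ ((ρ - ((1/a₁.re : ℝ) : ℂ) • outer ψ₁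
            - ((1/a₂.re : ℝ) : ℂ) • outer ψ₂) *ᵥ x) := by
      rw [hzdef]
      simp only [star_sub, star_smul, Matrix.mulVec_sub, Matrix.mulVec_smul,
        Matrix.sub_mulVec, Matrix.smul_mulVec, outer_mulVec,
        sub_dotProduct, dotProduct_sub, smul_dotProduct, dotProduct_smul,
        smul_eq_mul, hy1, hy2, hy1', hy2', hyy, horth, horth', hc₁', hc₂',
        ← ha₁def, ← ha₂def, hΛ₁, hΛ₂, star_div₀, hsa₁, hsa₂]
      field_simp
      ring
    rwa [key] at hB
end
end

section
/- Let ρ be a positive definite operator on a finite-dimensional Hilbert space, and |ψ₁⟩, |ψ₂⟩ vectors with ⟨ψ₁|ρ⁻¹|ψ₁⟩⟨ψ₂|ρ⁻¹|ψ₂⟩ > |⟨ψ₁|ρ⁻¹|ψ₂⟩|² (set D equal to this difference). With Λ₁ = (⟨ψ₂|ρ⁻¹|ψ₂⟩ − |⟨ψ₁|ρ⁻¹|ψ₂⟩|)/D and Λ₂ = (⟨ψ₁|ρ⁻¹|ψ₁⟩ − |⟨ψ₂|ρ⁻¹|ψ₁⟩|)/D, the operator ρ − Λ₁|ψ₁⟩⟨ψ₁|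 − Λ₂|ψ₂⟩⟨ψ₂| is positive semidefinite. -/
/-!
With `Ψ = [ψ₁ ψ₂]`, the Gram matrix `G = Ψᴴ ρ⁻¹ Ψ = !![d₁, g; ḡ, d₂]` (`g = ⟨ψ₁|ρ⁻¹|ψ₂⟩`,
`det G = D`) makes the block matrix `!![ρ, Ψ; Ψᴴ, G]` positive semidefinite, since its Schur
complement `G - Ψᴴ ρ⁻¹ Ψ` vanishes; the other Schur complement then gives `ρ ≥ Ψ G⁻¹ Ψᴴ`.
Finally `G⁻¹ - diag(Λ₁, Λ₂) = D⁻¹ !![|g|, -g; -ḡ, |g|] ≥ 0`, and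
`Ψ diag(Λ₁, Λ₂) Ψᴴ = Λ₁|ψ₁⟩⟨ψ₁| + Λ₂|ψ₂⟩⟨ψ₂|`.
-/

open Matrix ComplexOrder

noncomputable section

namespace Matrix

section Gram

variable {m n R : Type*} [CommSemiring R] [StarRing R]

theorem conjTranspose_mul_mul_apply [Fintype n] (B : Matrix n m R)
    (A : Matrix n n R) (i j : m) : (Bᴴ * A * B) i j = star (Bᵀ i) ⬝ᵥ (A *ᵥ Bᵀ j) := by
  rw [mul_apply', dotProduct_mulVec]
  rfl

theorem mul_diagonal_mul_conjTranspose [Fintype m] [DecidableEq m] (B : Matrix n m R)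
    (a : m → R) :
    B * diagonal a * Bᴴ = ∑ k, a k • vecMulVec (Bᵀ k) (star (Bᵀ k)) := by
  ext i j
  rw [mul_apply]
  simp only [mul_diagonal, conjTranspose_apply, Matrix.sum_apply, smul_apply,
    vecMulVec_apply, transpose_apply, Pi.star_apply, smul_eq_mul]
  exact Finset.sum_congr rfl fun k _ => by ring

end Gram

section Schur

variable {m n K : Type*} [Fintype m] [DecidableEq m] [Fintype n] [DecidableEq n]
  [Field K] [PartialOrder K] [StarRing K] [StarOrderedRing K]

theorem PosDef.posSemidef_sub_mul_inv_mul {ρ : Matrix n n K} (hρ : ρ.PosDef) (B : Matrix n m K)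
    (hG : (Bᴴ * ρ⁻¹ * B).PosDef) : (ρ - B * (Bᴴ * ρ⁻¹ * B)⁻¹ * Bᴴ).PosSemidef := by
  have := hρ.isUnit.invertible
  have := hG.isUnit.invertible
  refine (PosDef.fromBlocks₂₂ ρ B hG).mp ((PosDef.fromBlocks₁₁ B _ hρ).mpr ?_)
  simpa using PosSemidef.zero

theorem PosDef.posSemidef_sub_mul_mul {ρ : Matrix n n K} (hρ : ρ.PosDef) (B : Matrix n m K)
    (hG : (Bᴴ * ρ⁻¹ * B).PosDef) {M : Matrix m m K}
    (hM : ((Bᴴ * ρ⁻¹ * B)⁻¹ - M).PosSemidef) : (ρ - B * M * Bᴴ).PosSemidef := by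
  convert (hρ.posSemidef_sub_mul_inv_mul B hG).add (hM.mul_mul_conjTranspose_same B) using 1
  simp only [Matrix.mul_sub, Matrix.sub_mul]
  abel

end Schur

section FinTwo

variable {𝕜 : Type*} [RCLike 𝕜]

theorem IsHermitian.eq_fin_two {A : Matrix (Fin 2) (Fin 2) 𝕜} (hA : A.IsHermitian) :
    A = !![(RCLike.re (A 0 0) : 𝕜), A 0 1; star (A 0 1), (RCLike.re (A 1 1) : 𝕜)] := by
  ext i j
  fin_cases i <;> fin_cases j <;> simp [hA.coe_re_apply_self, ← hA.apply 0 1]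

theorem posSemidef_fin_two_norm (b : 𝕜) : !![(‖b‖ : 𝕜), b; star b, ‖b‖].PosSemidef := by
  convert (posSemidef_vecMulVec_self_star ![b, (‖b‖ : 𝕜)]).smul
    (show (0 : 𝕜) ≤ ((‖b‖⁻¹ : ℝ) : 𝕜) by simp) using 1
  ext i j
  simp only [smul_apply, vecMulVec_apply]
  rcases eq_or_ne b 0 with rfl | hb
  · fin_cases i <;> fin_cases j <;> simp
  · have : (‖b‖ : 𝕜) ≠ 0 := by simpa using hb
    fin_cases i <;> fin_cases j <;> simp [RCLike.mul_conj] <;> field_simp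

theorem posSemidef_inv_fin_two_sub_diagonal {d₁ d₂ : ℝ} {g : 𝕜} (hD : 0 < d₁ * d₂ - ‖g‖ ^ 2) :
    (!![(d₁ : 𝕜), g; star g, d₂]⁻¹ - diagonal ![(((d₂ - ‖g‖) / (d₁ * d₂ - ‖g‖ ^ 2) : ℝ) : 𝕜),
      (((d₁ - ‖g‖) / (d₁ * d₂ - ‖g‖ ^ 2) : ℝ) : 𝕜)]).PosSemidef := by
  have hD' : ((d₁ * d₂ - ‖g‖ ^ 2 : ℝ) : 𝕜) ≠ 0 := by exact_mod_cast hD.ne'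
  convert (posSemidef_fin_two_norm (-g)).smul
    (show (0 : 𝕜) ≤ (((d₁ * d₂ - ‖g‖ ^ 2)⁻¹ : ℝ) : 𝕜) by positivity) using 1
  rw [inv_def, det_fin_two_of, adjugate_fin_two_of, Ring.inverse_eq_inv', RCLike.star_def,
    RCLike.mul_conj]
  ext i j
  fin_cases i <;> fin_cases j <;> simp <;> field_simp <;> ring

end FinTwo

end Matrix

/-- Case (d) of the pair-maximality lemma: with
`D = ⟨ψ₁|ρ⁻¹|ψ₁⟩⟨ψ₂|ρ⁻¹|ψ₂⟩ − |⟨ψ₁|ρ⁻¹|ψ₂⟩|² > 0` and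
`Λ₁ = (⟨ψ₂|ρ⁻¹|ψ₂⟩ − |⟨ψ₁|ρ⁻¹|ψ₂⟩|)/D`, `Λ₂ = (⟨ψ₁|ρ⁻¹|ψ₁⟩ − |⟨ψ₂|ρ⁻¹|ψ₁⟩|)/D`,
the operator `ρ − Λ₁|ψ₁⟩⟨ψ₁| − Λ₂|ψ₂⟩⟨ψ₂|` is positive semidefinite. -/
theorem stmt3 {n : Type*} [Fintype n] [DecidableEq n]
    (ρ : Matrix n n ℂ) (hρ : ρ.PosDef) (ψ₁ ψ₂ : n → ℂ)
    (d₁ d₂ d₁₂ D Λ₁ Λ₂ : ℝ)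
    (hd₁ : d₁ = (star ψ₁ ⬝ᵥ (ρ⁻¹ *ᵥ ψ₁)).re)
    (hd₂ : d₂ = (star ψ₂ ⬝ᵥ (ρ⁻¹ *ᵥ ψ₂)).re)
    (hd₁₂ : d₁₂ = ‖star ψ₁ ⬝ᵥ (ρ⁻¹ *ᵥ ψ₂)‖)
    (hD : D = d₁ * d₂ - d₁₂ ^ 2) (hDpos : 0 < D)
    (hΛ₁ : Λ₁ = (d₂ - d₁₂) / D) (hΛ₂ : Λ₂ = (d₁ - d₁₂) / D) :
    (ρ - (Λ₁ : ℂ) • outer ψ₁ - (Λ₂ : ℂ) • outer ψ₂).PosSemidef := by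
  subst hΛ₁ hΛ₂ hD hd₁₂ hd₁ hd₂
  set B : Matrix n (Fin 2) ℂ := (of ![ψ₁, ψ₂])ᵀ
  have hB₀ : Bᵀ 0 = ψ₁ := rfl
  have hB₁ : Bᵀ 1 = ψ₂ := rfl
  have hG : Bᴴ * ρ⁻¹ * B = !![((star ψ₁ ⬝ᵥ (ρ⁻¹ *ᵥ ψ₁)).re : ℂ), star ψ₁ ⬝ᵥ (ρ⁻¹ *ᵥ ψ₂);
      star (star ψ₁ ⬝ᵥ (ρ⁻¹ *ᵥ ψ₂)), (star ψ₂ ⬝ᵥ (ρ⁻¹ *ᵥ ψ₂)).re] := by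
    rw [(hρ.inv.posSemidef.conjTranspose_mul_mul_same B).isHermitian.eq_fin_two]
    simp only [conjTranspose_mul_mul_apply, hB₀, hB₁]
    rfl
  have hGpos : (Bᴴ * ρ⁻¹ * B).PosDef := by
    rw [(hρ.inv.posSemidef.conjTranspose_mul_mul_same B).posDef_iff_det_ne_zero, hG,
      det_fin_two_of, Complex.star_def, Complex.mul_conj, Complex.normSq_eq_norm_sq]
    exact_mod_cast hDpos.ne'
  have := hρ.posSemidef_sub_mul_mul B hGpos (M := diagonal ![_, _])
    (by rw [hG]; exact posSemidef_inv_fin_two_sub_diagonal hDpos)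
  rwa [mul_diagonal_mul_conjTranspose, Fin.sum_univ_two, ← sub_sub, hB₀, hB₁] at this
end
end

section
/- Let |ψ⟩ be an entangled unit vector in C²⊗C². Then its partial transpose (|ψ⟩⟨ψ|)^{T_A} has exactly one negative eigenvalue and three nonnegative eigenvalues; in particular (|ψ⟩⟨ψ|)^{T_A} is not positive semidefinite. -/
open Matrix ComplexOrder

noncomputable section

/-- The product vector `|e⟩ ⊗ |f⟩` on `C^M ⊗ C^N`. -/
def prodVec {M N : ℕ} (e : Fin M → ℂ) (f : Fin N → ℂ) : Fin M × Fin N → ℂ :=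
  fun p => e p.1 * f p.2

/-- A separable positive operator on `C^M ⊗ C^N`: a finite nonnegative combination of
projectors onto product unit vectors. -/
def IsSepOp {M N : ℕ} (σ : Matrix (Fin M × Fin N) (Fin M × Fin N) ℂ) : Prop :=
  ∃ (k : ℕ) (c : Fin k → ℝ) (e : Fin k → Fin M → ℂ) (f : Fin k → Fin N → ℂ),
    (∀ i, 0 ≤ c i) ∧ (∀ i, star (e i) ⬝ᵥ e i = 1) ∧ (∀ i, star (f i) ⬝ᵥ f i = 1) ∧
    σ = ∑ i, (c i : ℂ) • outer (prodVec (e i) (f i))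

/-- A separable state: a separable positive operator of trace one. -/
def IsSepState {M N : ℕ} (σ : Matrix (Fin M × Fin N) (Fin M × Fin N) ℂ) : Prop :=
  IsSepOp σ ∧ σ.trace = 1

/-- Partial transposition on the first (Alice) tensor factor, in the standard basis. -/
def ptA {M N : ℕ} (ρ : Matrix (Fin M × Fin N) (Fin M × Fin N) ℂ) :
    Matrix (Fin M × Fin N) (Fin M × Fin N) ℂ :=
  Matrix.of fun p q => ρ (q.1, p.2) (p.1, q.2)

/-- The BSA weight `Λ(ρ)`: the supremum of `Tr σ` over separable positive operators `σ`
with `ρ − σ ≥ 0`. -/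
def BSAlam {M N : ℕ} (ρ : Matrix (Fin M × Fin N) (Fin M × Fin N) ℂ) : ℝ :=
  sSup {t : ℝ | ∃ σ, IsSepOp σ ∧ (ρ - σ).PosSemidef ∧ σ.trace = (t : ℂ)}

open Polynomial in
theorem det_fin_four' {R : Type*} [CommRing R] (A : Matrix (Fin 4) (Fin 4) R) : det A =
    A 0 0*(A 1 1*(A 2 2*A 3 3 - A 2 3*A 3 2) - A 1 2*(A 2 1*A 3 3 - A 2 3*A 3 1) + A 1 3*(A 2 1*A 3 2 - A 2 2*A 3 1))
  - A 0 1*(A 1 0*(A 2 2*A 3 3 - A 2 3*A 3 2) - A 1 2*(A 2 0*A 3 3 - A 2 3*A 3 0) + A 1 3*(A 2 0*A 3 2 - A 2 2*A 3 0))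
  + A 0 2*(A 1 0*(A 2 1*A 3 3 - A 2 3*A 3 1) - A 1 1*(A 2 0*A 3 3 - A 2 3*A 3 0) + A 1 3*(A 2 0*A 3 1 - A 2 1*A 3 0))
  - A 0 3*(A 1 0*(A 2 1*A 3 2 - A 2 2*A 3 1) - A 1 1*(A 2 0*A 3 2 - A 2 2*A 3 0) + A 1 2*(A 2 0*A 3 1 - A 2 1*A 3 0)) := by
  rw [det_succ_row_zero, Fin.sum_univ_four]
  simp (config := { decide := true }) [det_fin_three, Fin.succAbove, Fin.lt_def]
  have h3 : (Fin.succ 2 : Fin 4) = 3 := rfl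
  have h2 : (Fin.castSucc 2 : Fin 4) = 2 := rfl
  ring

def e4 : Fin 4 ≃ Fin 2 × Fin 2 :=
  Equiv.ofBijective ![(0,0),(0,1),(1,0),(1,1)] (by decide)

/-- eigen side -/
lemma detA {n : Type*} [Fintype n] [DecidableEq n] {A : Matrix n n ℂ}
    (hA : A.IsHermitian) (x : ℂ) :
    (x • (1 : Matrix n n ℂ) - A).det = ∏ i, (x - (hA.eigenvalues i : ℂ)) := by
  set U := (hA.eigenvectorUnitary : Matrix n n ℂ) with hUdef
  have h1 : U * star U = 1 := (Matrix.mem_unitaryGroup_iff).mp hA.eigenvectorUnitary.2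
  have h2 : star U * U = 1 := (Matrix.mem_unitaryGroup_iff').mp hA.eigenvectorUnitary.2
  have key : x • (1 : Matrix n n ℂ) - A
      = U * (x • (1 : Matrix n n ℂ) - diagonal (RCLike.ofReal ∘ hA.eigenvalues)) * star U := by
    rw [Matrix.mul_sub, Matrix.sub_mul]
    congr 1
    · rw [Matrix.mul_smul, Matrix.mul_one, Matrix.smul_mul, h1]
    · exact hA.spectral_theorem
  rw [key, det_mul, det_mul, mul_comm, ← mul_assoc, ← det_mul, h2, det_one, one_mul,
    smul_one_eq_diagonal, diagonal_sub, det_diagonal]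
  rfl

/-- explicit side -/
lemma detB (ψ : Fin 2 × Fin 2 → ℂ) (x : ℂ)
    (hn : (starRingEnd ℂ) (ψ 0) * ψ 0 + (starRingEnd ℂ) (ψ (0,1)) * ψ (0,1)
        + (starRingEnd ℂ) (ψ (1,0)) * ψ (1,0) + (starRingEnd ℂ) (ψ 1) * ψ 1 = 1) :
    (x • (1 : Matrix (Fin 2 × Fin 2) (Fin 2 × Fin 2) ℂ) - ptA (outer ψ)).det =
      (x ^ 2 - x + (ψ 0 * ψ 1 - ψ (0,1) * ψ (1,0)) *
          ((starRingEnd ℂ) (ψ 0) * (starRingEnd ℂ) (ψ 1) -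
           (starRingEnd ℂ) (ψ (0,1)) * (starRingEnd ℂ) (ψ (1,0)))) *
      (x ^ 2 - (ψ 0 * ψ 1 - ψ (0,1) * ψ (1,0)) *
          ((starRingEnd ℂ) (ψ 0) * (starRingEnd ℂ) (ψ 1) -
           (starRingEnd ℂ) (ψ (0,1)) * (starRingEnd ℂ) (ψ (1,0)))) := by
  rw [← det_reindex_self e4.symm (x • (1 : Matrix (Fin 2 × Fin 2) (Fin 2 × Fin 2) ℂ) - ptA (outer ψ))]
  have hB : (reindex e4.symm e4.symm (x • (1 : Matrix (Fin 2 × Fin 2) (Fin 2 × Fin 2) ℂ) - ptA (outer ψ)))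
      = !![x - ψ 0 * (starRingEnd ℂ) (ψ 0), -(ψ 0 * (starRingEnd ℂ) (ψ (0,1))), -(ψ (1,0) * (starRingEnd ℂ) (ψ 0)), -(ψ (1,0) * (starRingEnd ℂ) (ψ (0,1)));
           -(ψ (0,1) * (starRingEnd ℂ) (ψ 0)), x - ψ (0,1) * (starRingEnd ℂ) (ψ (0,1)), -(ψ 1 * (starRingEnd ℂ) (ψ 0)), -(ψ 1 * (starRingEnd ℂ) (ψ (0,1)));
           -(ψ 0 * (starRingEnd ℂ) (ψ (1,0))), -(ψ 0 * (starRingEnd ℂ) (ψ 1)), x - ψ (1,0) * (starRingEnd ℂ) (ψ (1,0)), -(ψ (1,0) * (starRingEnd ℂ) (ψ 1));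
           -(ψ (0,1) * (starRingEnd ℂ) (ψ (1,0))), -(ψ (0,1) * (starRingEnd ℂ) (ψ 1)), -(ψ 1 * (starRingEnd ℂ) (ψ (1,0))), x - ψ 1 * (starRingEnd ℂ) (ψ 1)] := by
    ext i j
    fin_cases i <;> fin_cases j <;>
      simp [e4, ptA, outer, Matrix.one_apply, Matrix.vecMulVec_apply, Equiv.ofBijective,
        Prod.ext_iff, Prod.mk_zero_zero, Prod.mk_one_one]
  rw [hB, det_fin_four']
  simp only [Matrix.cons_val', Matrix.cons_val_zero, Matrix.cons_val_one, Matrix.head_cons,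
    Matrix.empty_val', Matrix.cons_val_fin_one, Matrix.head_fin_const, Matrix.cons_val_two,
    Matrix.cons_val_three, Matrix.tail_cons, Matrix.of_apply]
  linear_combination (-(x * (x ^ 2 - (ψ 0 * ψ 1 - ψ (0,1) * ψ (1,0)) *
      ((starRingEnd ℂ) (ψ 0) * (starRingEnd ℂ) (ψ 1) -
       (starRingEnd ℂ) (ψ (0,1)) * (starRingEnd ℂ) (ψ (1,0)))))) * hn


/-- For an entangled (non-product) unit vector `ψ` in `C²⊗C²`, the partial transpose
`(|ψ⟩⟨ψ|)^{T_A}` has exactly one negative and three nonnegative eigenvalues; in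
particular it is not positive semidefinite. -/
theorem stmt6 (ψ : Fin 2 × Fin 2 → ℂ) (hψ : star ψ ⬝ᵥ ψ = 1)
    (hent : ¬ ∃ (e f : Fin 2 → ℂ), ψ = prodVec e f)
    (hherm : (ptA (outer ψ)).IsHermitian) :
    (Finset.univ.filter fun i => hherm.eigenvalues i < 0).card = 1 ∧
    (Finset.univ.filter fun i => 0 ≤ hherm.eigenvalues i).card = 3 ∧
    ¬ (ptA (outer ψ)).PosSemidef := by
  classical
  have hn : (starRingEnd ℂ) (ψ 0) * ψ 0 + (starRingEnd ℂ) (ψ (0,1)) * ψ (0,1)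
        + (starRingEnd ℂ) (ψ (1,0)) * ψ (1,0) + (starRingEnd ℂ) (ψ 1) * ψ 1 = 1 := by
    have := hψ
    simp only [dotProduct, Fintype.sum_prod_type, Fin.sum_univ_two, Pi.star_apply,
      Complex.star_def, Prod.mk_zero_zero, Prod.mk_one_one] at this
    linear_combination this
  set D : ℂ := ψ 0 * ψ 1 - ψ (0,1) * ψ (1,0) with hDdef
  have hD : D ≠ 0 := by
    intro h
    apply hent
    by_cases hp : ψ 0 = 0
    · by_cases hq : ψ (0,1) = 0
      · refine ⟨![0, 1], ![ψ (1,0), ψ 1], ?_⟩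
        funext pr
        obtain ⟨i, j⟩ := pr
        fin_cases i <;> fin_cases j <;>
          simp_all [prodVec, Prod.mk_zero_zero, Prod.mk_one_one]
      · have hr : ψ (1,0) = 0 := by
          have : ψ (0,1) * ψ (1,0) = 0 := by
            rw [hDdef] at h; rw [hp] at h; linear_combination -h
          rcases mul_eq_zero.mp this with h' | h'
          · exact absurd h' hq
          · exact h'
        refine ⟨![ψ (0,1), ψ 1], ![0, 1], ?_⟩
        funext pr
        obtain ⟨i, j⟩ := pr
        fin_cases i <;> fin_cases j <;>
          simp_all [prodVec, Prod.mk_zero_zero, Prod.mk_one_one]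
    · refine ⟨![1, ψ (1,0) / ψ 0], ![ψ 0, ψ (0,1)], ?_⟩
      have hs : ψ 1 = ψ (1,0) * ψ (0,1) / ψ 0 := by
        rw [eq_div_iff hp, hDdef] at *
        linear_combination h
      funext pr
      obtain ⟨i, j⟩ := pr
      fin_cases i <;> fin_cases j <;>
        simp_all [prodVec, Prod.mk_zero_zero, Prod.mk_one_one] <;> field_simp <;> ring
  set t : ℝ := Complex.normSq D with htdef
  have ht0 : 0 < t := Complex.normSq_pos.mpr hD
  have htC : (t : ℂ) = D * (starRingEnd ℂ) D := (Complex.mul_conj D).symm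
  -- norm one in reals
  have hnR : Complex.normSq (ψ 0) + Complex.normSq (ψ (0,1)) + Complex.normSq (ψ (1,0))
      + Complex.normSq (ψ 1) = 1 := by
    have : ((Complex.normSq (ψ 0) + Complex.normSq (ψ (0,1)) + Complex.normSq (ψ (1,0))
        + Complex.normSq (ψ 1) : ℝ) : ℂ) = 1 := by
      push_cast
      rw [Complex.normSq_eq_conj_mul_self, Complex.normSq_eq_conj_mul_self,
        Complex.normSq_eq_conj_mul_self, Complex.normSq_eq_conj_mul_self]
      linear_combination hn
    exact_mod_cast this
  have ht4 : t ≤ 1 / 4 := by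
    have habs : ‖D‖ ≤ ‖ψ 0‖ * ‖ψ 1‖
        + ‖ψ (0,1)‖ * ‖ψ (1,0)‖ := by
      calc ‖D‖ ≤ ‖ψ 0 * ψ 1‖ + ‖ψ (0,1) * ψ (1,0)‖ := by
            rw [hDdef]
            exact norm_sub_le _ _
        _ = _ := by rw [norm_mul, norm_mul]
    have h0 := norm_nonneg D
    have e0 : Complex.normSq (ψ 0) = ‖ψ 0‖ ^ 2 := (Complex.sq_norm _).symm
    have e1 : Complex.normSq (ψ (0,1)) = ‖ψ (0,1)‖ ^ 2 := (Complex.sq_norm _).symm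
    have e2 : Complex.normSq (ψ (1,0)) = ‖ψ (1,0)‖ ^ 2 := (Complex.sq_norm _).symm
    have e3 : Complex.normSq (ψ 1) = ‖ψ 1‖ ^ 2 := (Complex.sq_norm _).symm
    have eD : t = ‖D‖ ^ 2 := by rw [htdef, ← Complex.sq_norm]
    rw [eD]
    rw [e0, e1, e2, e3] at hnR
    nlinarith [sq_nonneg (‖ψ 0‖ - ‖ψ 1‖),
      sq_nonneg (‖ψ (0,1)‖ - ‖ψ (1,0)‖),
      norm_nonneg (ψ 0), norm_nonneg (ψ 1),
      norm_nonneg (ψ (0,1)), norm_nonneg (ψ (1,0)), habs, h0]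
  -- the four roots
  set σ : ℝ := Real.sqrt (1 - 4 * t) with hσdef
  have hσ0 : 0 ≤ σ := Real.sqrt_nonneg _
  have hσsq : σ ^ 2 = 1 - 4 * t := Real.sq_sqrt (by linarith)
  have hσ1 : σ ≤ 1 := by
    nlinarith [hσsq, hσ0, ht0]
  set α : ℝ := (1 + σ) / 2 with hαdef
  set β : ℝ := Real.sqrt t with hβdef
  have hβ0 : 0 < β := Real.sqrt_pos.mpr ht0
  have hβsq : β ^ 2 = t := Real.sq_sqrt ht0.le
  have hα0 : 0 ≤ α := by rw [hαdef]; linarith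
  have hα1 : 0 ≤ 1 - α := by rw [hαdef]; linarith
  have hαprod : α * (1 - α) = t := by rw [hαdef]; nlinarith [hσsq]
  -- key identity
  have key : ∀ x : ℂ, ∏ i, (x - (hherm.eigenvalues i : ℂ))
      = (x - (α : ℂ)) * (x - ((1 - α : ℝ) : ℂ)) * (x - (β : ℂ)) * (x - ((-β : ℝ) : ℂ)) := by
    intro x
    rw [← detA hherm x, detB ψ x hn]
    have hDc : (ψ 0 * ψ 1 - ψ (0,1) * ψ (1,0)) *
          ((starRingEnd ℂ) (ψ 0) * (starRingEnd ℂ) (ψ 1) -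
           (starRingEnd ℂ) (ψ (0,1)) * (starRingEnd ℂ) (ψ (1,0))) = (t : ℂ) := by
      rw [htC, hDdef]
      simp only [_root_.map_sub, _root_.map_mul]
      try ring
    rw [hDc]
    have h1 : (α : ℂ) * (1 - (α : ℂ)) = (t : ℂ) := by
      exact_mod_cast congrArg (Complex.ofReal) hαprod
    have h2 : (β : ℂ) * (β : ℂ) = (t : ℂ) := by
      exact_mod_cast congrArg (Complex.ofReal) (by nlinarith [hβsq] : β * β = t)
    push_cast
    linear_combination ((t : ℂ) - x ^ 2) * h1 + (x ^ 2 - x + (α : ℂ) * (1 - (α : ℂ))) * h2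
  -- polynomial identity
  have hpoly : ((Finset.univ.val.map (fun i : Fin 2 × Fin 2 => ((hherm.eigenvalues i : ℝ) : ℂ))).map
        (fun a => Polynomial.X - Polynomial.C a)).prod
      = ((({α, 1 - α, β, -β} : Multiset ℝ).map (fun a : ℝ => (a : ℂ))).map
        (fun a => Polynomial.X - Polynomial.C a)).prod := by
    apply Polynomial.funext
    intro x
    have lhs_eval : ∀ (m : Multiset ℂ),
        Polynomial.eval x ((m.map (fun a => Polynomial.X - Polynomial.C a)).prod)
        = (m.map (fun a => x - a)).prod := by
      intro m
      rw [Polynomial.eval_multiset_prod, Multiset.map_map]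
      simp [Function.comp]
    rw [lhs_eval, lhs_eval]
    have l1 : ((Finset.univ.val.map (fun i : Fin 2 × Fin 2 =>
        ((hherm.eigenvalues i : ℝ) : ℂ))).map (fun a => x - a)).prod
        = ∏ i, (x - (hherm.eigenvalues i : ℂ)) := by
      rw [Multiset.map_map]
      rfl
    rw [l1, key x]
    simp only [Multiset.insert_eq_cons, Multiset.map_cons, Multiset.map_singleton,
      Multiset.prod_cons, Multiset.prod_singleton]
    ring
  have hroots : Finset.univ.val.map (fun i : Fin 2 × Fin 2 => ((hherm.eigenvalues i : ℝ) : ℂ))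
      = ({α, 1 - α, β, -β} : Multiset ℝ).map (fun a : ℝ => (a : ℂ)) := by
    have := congrArg Polynomial.roots hpoly
    rwa [Polynomial.roots_multiset_prod_X_sub_C, Polynomial.roots_multiset_prod_X_sub_C] at this
  have hms : Finset.univ.val.map hherm.eigenvalues = ({α, 1 - α, β, -β} : Multiset ℝ) := by
    apply Multiset.map_injective Complex.ofReal_injective
    rw [Multiset.map_map]
    simpa [Function.comp] using hroots
  have hcount : ∀ (p : ℝ → Prop) (hp : DecidablePred p) (inst : DecidablePred fun i => p (hherm.eigenvalues i)),
      (Finset.univ.filter fun i => p (hherm.eigenvalues i)).card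
      = Multiset.countP p ({α, 1 - α, β, -β} : Multiset ℝ) := by
    intro p hp inst
    rw [← hms, Multiset.countP_map, Finset.card_def, Finset.filter_val]
    congr!
  have hc1 : (Finset.univ.filter fun i => hherm.eigenvalues i < 0).card = 1 := by
    rw [hcount (fun x => x < 0) (fun x => Real.decidableLT x 0) _]
    rw [show ({α, 1 - α, β, -β} : Multiset ℝ) = α ::ₘ (1 - α) ::ₘ β ::ₘ (-β) ::ₘ 0 from rfl]
    simp [Multiset.countP_cons, Multiset.countP_zero, Multiset.countP_eq_card_filter, Multiset.filter_singleton, not_lt.mpr hα0, not_lt.mpr hα1,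
      not_lt.mpr hβ0.le, neg_neg_iff_pos.mpr hβ0]
  have hc2 : (Finset.univ.filter fun i => 0 ≤ hherm.eigenvalues i).card = 3 := by
    rw [hcount (fun x => 0 ≤ x) (fun x => Real.decidableLE 0 x) _]
    rw [show ({α, 1 - α, β, -β} : Multiset ℝ) = α ::ₘ (1 - α) ::ₘ β ::ₘ (-β) ::ₘ 0 from rfl]
    simp [Multiset.countP_cons, Multiset.countP_zero, Multiset.countP_eq_card_filter, Multiset.filter_singleton, hα0, hα1, hβ0.le,
      not_le.mpr (neg_neg_iff_pos.mpr hβ0)]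
  refine ⟨hc1, hc2, ?_⟩
  intro hpsd
  have hneg : ∃ i, hherm.eigenvalues i < 0 := by
    have : (Finset.univ.filter fun i => hherm.eigenvalues i < 0).Nonempty := by
      rw [← Finset.card_pos, hc1]; norm_num
    obtain ⟨i, hi⟩ := this
    exact ⟨i, (Finset.mem_filter.mp hi).2⟩
  obtain ⟨i, hi⟩ := hneg
  have := hpsd.eigenvalues_nonneg i
  have heq : hpsd.1.eigenvalues i = hherm.eigenvalues i := rfl
  rw [heq] at this
  linarith
end
end

section
/- Let |ψ⟩ = N₁|e₁,f₁⟩ + N₂|e₂,f₂⟩ in C²⊗C² with N₁ > N₂ > 0, where e₁, e₂ (and f₁, f₂) are linearly independent unit vectors. For x := N₂²/N₁² < α² < 1, define N(α)² := α²N₁² + N₂²/α² + 2N₁N₂ Re(⟨e₁|e₂⟩⟨f₁|f₂⟩) and |ψ(α)⟩ := (αN₁|e₁,f₁⟩ + (N₂/α)|e₂,f₂⟩)/N(α). Then the rank-one projector decomposes as |ψ⟩⟨ψ| = N(α)²|ψ(α)⟩⟨ψ(α)| + N₁²(1−α²)|e₁,f₁⟩⟨e₁,f₁| + N₂²(1−1/α²)|e₂,f₂⟩⟨e₂,f₂|,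 and N(α)² < 1 holds whenever ‖ψ‖ = 1. -/
open Matrix ComplexOrder

noncomputable section

section AuxStmt8

lemma dot_prodVec' {M N : ℕ} (e e' : Fin M → ℂ) (f f' : Fin N → ℂ) :
    star (prodVec e f) ⬝ᵥ prodVec e' f' = (star e ⬝ᵥ e') * (star f ⬝ᵥ f') := by
  simp only [dotProduct, prodVec, Pi.star_apply, Fintype.sum_prod_type, Finset.sum_mul,
    Finset.mul_sum, star_mul']
  rw [Finset.sum_comm]
  exact Finset.sum_congr rfl fun j _ => Finset.sum_congr rfl fun i _ => by ring

lemma dot_self_eq' {n : Type*} [Fintype n] (x : n → ℂ) :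
    star x ⬝ᵥ x = ((∑ i, Complex.normSq (x i) : ℝ) : ℂ) := by
  push_cast
  simp only [dotProduct, Pi.star_apply, Complex.star_def]
  refine Finset.sum_congr rfl fun i _ => ?_
  rw [mul_comm, Complex.mul_conj]

lemma star_dot' {n : Type*} [Fintype n] (x y : n → ℂ) :
    star (star x ⬝ᵥ y) = star y ⬝ᵥ x := by
  simp only [dotProduct, Pi.star_apply, star_sum, star_mul', star_star]
  exact Finset.sum_congr rfl fun i _ => by ring

lemma outer_smul' {n : Type*} [Fintype n] (c : ℂ) (x : n → ℂ) :
    outer (c • x) = (c * star c) • outer x := by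
  ext p q
  simp only [outer, Matrix.vecMulVec_apply, Pi.star_apply, Pi.smul_apply, smul_eq_mul,
    Matrix.smul_apply, star_mul']
  ring

lemma outer_zero' {n : Type*} [Fintype n] : outer (0 : n → ℂ) = 0 := by
  ext p q
  simp [outer, Matrix.vecMulVec_apply]

end AuxStmt8

/-- Optimization decomposition of a rank-one projector: with
`ψ = N₁|e₁,f₁⟩ + N₂|e₂,f₂⟩` a unit vector, `N₁ > N₂ > 0`, and `N₂²/N₁² < α² < 1`, put
`N(α)² = α²N₁² + N₂²/α² + 2N₁N₂ Re(⟨e₁|e₂⟩⟨f₁|f₂⟩)` and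
`ψ(α) = (αN₁|e₁,f₁⟩ + (N₂/α)|e₂,f₂⟩)/N(α)`.  Then
`|ψ⟩⟨ψ| = N(α)²|ψ(α)⟩⟨ψ(α)| + N₁²(1−α²)|e₁,f₁⟩⟨e₁,f₁| + N₂²(1−1/α²)|e₂,f₂⟩⟨e₂,f₂|`
and `N(α)² < 1`. -/


theorem stmt8 (N₁ N₂ α : ℝ) (hN : N₁ > N₂) (hN₂ : N₂ > 0)
    (e₁ e₂ f₁ f₂ : Fin 2 → ℂ)
    (he₁ : star e₁ ⬝ᵥ e₁ = 1) (he₂ : star e₂ ⬝ᵥ e₂ = 1)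
    (hf₁ : star f₁ ⬝ᵥ f₁ = 1) (hf₂ : star f₂ ⬝ᵥ f₂ = 1)
    (hel : LinearIndependent ℂ ![e₁, e₂]) (hfl : LinearIndependent ℂ ![f₁, f₂])
    (ψ : Fin 2 × Fin 2 → ℂ)
    (hψ : ψ = (N₁ : ℂ) • prodVec e₁ f₁ + (N₂ : ℂ) • prodVec e₂ f₂)
    (hunit : star ψ ⬝ᵥ ψ = 1)
    (hα0 : 0 < α) (hαlow : N₂ ^ 2 / N₁ ^ 2 < α ^ 2) (hαhigh : α ^ 2 < 1)
    (Nα2 : ℝ)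
    (hNα2 : Nα2 = α ^ 2 * N₁ ^ 2 + N₂ ^ 2 / α ^ 2 +
      2 * N₁ * N₂ * ((star e₁ ⬝ᵥ e₂) * (star f₁ ⬝ᵥ f₂)).re)
    (ψα : Fin 2 × Fin 2 → ℂ)
    (hψα : ψα = ((Real.sqrt Nα2 : ℝ) : ℂ)⁻¹ •
      (((α * N₁ : ℝ) : ℂ) • prodVec e₁ f₁ + ((N₂ / α : ℝ) : ℂ) • prodVec e₂ f₂)) :
    outer ψ = (Nα2 : ℂ) • outer ψα
        + ((N₁ ^ 2 * (1 - α ^ 2) : ℝ) : ℂ) • outer (prodVec e₁ f₁)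
        + ((N₂ ^ 2 * (1 - 1 / α ^ 2) : ℝ) : ℂ) • outer (prodVec e₂ f₂) ∧
      Nα2 < 1 := by
  set v₁ := prodVec e₁ f₁ with hv₁def
  set v₂ := prodVec e₂ f₂ with hv₂def
  obtain ⟨st, hstdef⟩ : ∃ c, (star e₁ ⬝ᵥ e₂) * (star f₁ ⬝ᵥ f₂) = c := ⟨_, rfl⟩
  rw [hstdef] at hNα2
  have hα2 : (0:ℝ) < α ^ 2 := by positivity
  have hα0' : (α:ℝ) ≠ 0 := hα0.ne'
  have hN₁ : (0:ℝ) < N₁ := lt_trans hN₂ hN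
  have hv11 : star v₁ ⬝ᵥ v₁ = 1 := by rw [hv₁def, dot_prodVec', he₁, hf₁, one_mul]
  have hv22 : star v₂ ⬝ᵥ v₂ = 1 := by rw [hv₂def, dot_prodVec', he₂, hf₂, one_mul]
  have hv12 : star v₁ ⬝ᵥ v₂ = st := by rw [hv₁def, hv₂def, dot_prodVec', hstdef]
  have hv21 : star v₂ ⬝ᵥ v₁ = (starRingEnd ℂ) st := by
    rw [← hv12, ← star_dot', Complex.star_def]
  set χ : Fin 2 × Fin 2 → ℂ :=
    ((α * N₁ : ℝ) : ℂ) • v₁ + ((N₂ / α : ℝ) : ℂ) • v₂ with hχdef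
  -- expansion of the norm of ψ
  have hexp : star ψ ⬝ᵥ ψ = (N₁:ℂ)^2 + (N₂:ℂ)^2 + (N₁:ℂ) * (N₂:ℂ) * (st + (starRingEnd ℂ) st) := by
    rw [hψ]
    simp only [star_add, star_smul, add_dotProduct, dotProduct_add, smul_dotProduct,
      dotProduct_smul, hv11, hv22, hv12, hv21, smul_eq_mul, Complex.star_def,
      Complex.conj_ofReal, mul_one]
    ring
  have hone : N₁ ^ 2 + N₂ ^ 2 + 2 * N₁ * N₂ * st.re = 1 := by
    have h2 := hunit
    rw [hexp, Complex.add_conj] at h2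
    push_cast at h2
    have h3 : ((N₁ ^ 2 + N₂ ^ 2 + 2 * N₁ * N₂ * st.re : ℝ) : ℂ) = ((1:ℝ) : ℂ) := by
      push_cast
      linear_combination h2
    exact_mod_cast h3
  -- norm of χ
  have hχval : star χ ⬝ᵥ χ = ((Nα2 : ℝ) : ℂ) := by
    rw [hχdef]
    simp only [star_add, star_smul, add_dotProduct, dotProduct_add, smul_dotProduct,
      dotProduct_smul, hv11, hv22, hv12, hv21, smul_eq_mul, Complex.star_def,
      Complex.conj_ofReal, mul_one]
    rw [hNα2]
    have hre : st + (starRingEnd ℂ) st = 2 * (st.re : ℂ) := by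
      rw [Complex.add_conj]; push_cast; ring
    have hα0c : (α : ℂ) ≠ 0 := by exact_mod_cast hα0'
    push_cast
    field_simp
    linear_combination ((N₁:ℂ) * N₂ * (α:ℂ) ^ 2) * hre
  -- Nα2 is nonnegative
  have hsum : Nα2 = ∑ i, Complex.normSq (χ i) := by
    have := hχval
    rw [dot_self_eq'] at this
    exact_mod_cast this.symm
  have hNα2nn : 0 ≤ Nα2 := by
    rw [hsum]
    exact Finset.sum_nonneg fun i _ => Complex.normSq_nonneg _
  -- the core outer-product identity with χ
  have houter : outer ψ = outer χ
      + ((N₁ ^ 2 * (1 - α ^ 2) : ℝ) : ℂ) • outer v₁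
      + ((N₂ ^ 2 * (1 - 1 / α ^ 2) : ℝ) : ℂ) • outer v₂ := by
    ext p q
    simp only [outer, Matrix.add_apply, Matrix.smul_apply, Matrix.vecMulVec_apply,
      Pi.star_apply, hψ, hχdef, Pi.add_apply, Pi.smul_apply, smul_eq_mul,
      Complex.star_def, map_add, _root_.map_mul, Complex.conj_ofReal]
    have hα0c : (α : ℂ) ≠ 0 := by exact_mod_cast hα0'
    push_cast
    field_simp
    ring
  -- Nα2 • outer ψα = outer χ
  have hkey : (Nα2 : ℂ) • outer ψα = outer χ := by
    rcases hNα2nn.lt_or_eq with hpos | hzero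
    · have hsq : (Real.sqrt Nα2) ^ 2 = Nα2 := Real.sq_sqrt hNα2nn
      have hs0 : Real.sqrt Nα2 ≠ 0 := by positivity
      have hs0c : ((Real.sqrt Nα2 : ℝ) : ℂ) ≠ 0 := by exact_mod_cast hs0
      have hsqc : ((Real.sqrt Nα2 : ℝ) : ℂ) ^ 2 = (Nα2 : ℂ) := by exact_mod_cast hsq
      rw [hψα, outer_smul', smul_smul]
      have hco : (Nα2 : ℂ) * ((((Real.sqrt Nα2 : ℝ) : ℂ))⁻¹ *
          star ((((Real.sqrt Nα2 : ℝ) : ℂ))⁻¹)) = 1 := by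
        rw [Complex.star_def, map_inv₀, Complex.conj_ofReal]
        field_simp
        linear_combination -hsqc
      rw [hco, one_smul]
    · have hz : ∀ i, χ i = 0 := by
        intro i
        have h0 : ∑ j, Complex.normSq (χ j) = 0 := by rw [← hsum, ← hzero]
        have := (Finset.sum_eq_zero_iff_of_nonneg
          (fun j _ => Complex.normSq_nonneg (χ j))).mp h0 i (Finset.mem_univ i)
        exact Complex.normSq_eq_zero.mp this
      have hχ0 : χ = 0 := funext hz
      rw [← hzero, hχ0, outer_zero']
      simp
  refine ⟨?_, ?_⟩
  · rw [houter, ← hkey]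
  · -- Nα2 < 1
    have h1 : N₂ ^ 2 < α ^ 2 * N₁ ^ 2 := by
      have := (div_lt_iff₀ (by positivity : (0:ℝ) < N₁ ^ 2)).mp hαlow
      linarith
    have h2 : N₂ ^ 2 / α ^ 2 < N₁ ^ 2 := by
      rw [div_lt_iff₀ hα2]
      nlinarith
    have heq : α ^ 2 * (N₂ ^ 2 / α ^ 2) = N₂ ^ 2 := by field_simp
    have hp : 0 < (1 - α ^ 2) * (N₁ ^ 2 - N₂ ^ 2 / α ^ 2) :=
      mul_pos (by linarith) (by linarith)
    rw [hNα2]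
    nlinarith [hp, heq, hone]
end
end

section
/- For any density matrix ρ on C^M ⊗ C^N, the supremum Λ of Tr(σ) over all positive semidefinite separable operators σ (not normalized) with ρ − σ ≥ 0 is attained; i.e., there exists a separable σ* with ρ − σ* ≥ 0 and Tr(σ*) = Λ. Moreover 0 ≤ Λ ≤ 1, and Λ = 1 if and only if ρ is separable. -/
open Matrix ComplexOrder

noncomputable section

/-! ### Auxiliary lemmas -/

lemma outer_trace {n : Type*} [Fintype n] (ψ : n → ℂ) :
    (outer ψ).trace = star ψ ⬝ᵥ ψ := by
  simp [outer, Matrix.trace, Matrix.diag, Matrix.vecMulVec_apply, dotProduct, mul_comm]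

lemma prodVec_norm {M N : ℕ} (e : Fin M → ℂ) (f : Fin N → ℂ)
    (he : star e ⬝ᵥ e = 1) (hf : star f ⬝ᵥ f = 1) :
    star (prodVec e f) ⬝ᵥ (prodVec e f) = 1 := by
  have : star (prodVec e f) ⬝ᵥ (prodVec e f) = (star e ⬝ᵥ e) * (star f ⬝ᵥ f) := by
    simp only [prodVec, dotProduct, Pi.star_apply, Fintype.sum_prod_type, Finset.sum_mul,
      Finset.mul_sum, star_mul']
    rw [Finset.sum_comm]
    exact Finset.sum_congr rfl fun b _ => Finset.sum_congr rfl fun a _ => by ring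
  rw [this, he, hf, one_mul]

lemma real_smul_mat {n : Type*} (c : ℝ) (A : Matrix n n ℂ) :
    (c : ℂ) • A = c • A := by
  rw [← smul_one_smul ℂ c A, Complex.real_smul, mul_one]

lemma psd_trace_nonneg {n : Type*} [Fintype n] [DecidableEq n] {A : Matrix n n ℂ}
    (hA : A.PosSemidef) : 0 ≤ A.trace := by
  obtain ⟨B, rfl⟩ : ∃ B : Matrix n n ℂ, A = Bᴴ * B := by
    open MatrixOrder in exact CStarAlgebra.nonneg_iff_eq_star_mul_self.mp hA.nonneg
  rw [Matrix.trace]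
  refine Finset.sum_nonneg fun j _ => ?_
  rw [Matrix.diag_apply, Matrix.mul_apply]
  refine Finset.sum_nonneg fun i _ => ?_
  simpa [Matrix.conjTranspose_apply] using star_mul_self_nonneg (B i j)

lemma psd_trace_eq_zero {n : Type*} [Fintype n] [DecidableEq n] {A : Matrix n n ℂ}
    (hA : A.PosSemidef) (h : A.trace = 0) : A = 0 := by
  obtain ⟨B, rfl⟩ : ∃ B : Matrix n n ℂ, A = Bᴴ * B := by
    open MatrixOrder in exact CStarAlgebra.nonneg_iff_eq_star_mul_self.mp hA.nonneg
  suffices hB : B = 0 by simp [hB]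
  have h2 : ∑ j, ∑ i, star (B i j) * B i j = 0 := by
    rw [← h, Matrix.trace]
    exact Finset.sum_congr rfl fun j _ => by
      rw [Matrix.diag_apply, Matrix.mul_apply]
      exact Finset.sum_congr rfl fun i _ => by simp [Matrix.conjTranspose_apply]
  have h3 : ∀ j ∈ Finset.univ, ∀ i ∈ Finset.univ, star (B i j) * B i j = 0 := by
    have := (Finset.sum_eq_zero_iff_of_nonneg (fun j _ =>
      Finset.sum_nonneg fun i _ => star_mul_self_nonneg (B i j))).mp h2
    intro j hj i hi
    exact (Finset.sum_eq_zero_iff_of_nonneg (fun i _ => star_mul_self_nonneg (B i j))).mp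
      (this j hj) i hi
  ext i j
  have := h3 j (Finset.mem_univ j) i (Finset.mem_univ i)
  have h0 : (starRingEnd ℂ) (B i j) * B i j = 0 := by simpa using this
  rw [mul_comm, Complex.mul_conj] at h0
  exact_mod_cast Complex.normSq_eq_zero.mp (by exact_mod_cast h0)

/-- The trace of a separable representation is the (real) sum of the coefficients. -/
lemma rep_trace {M N k : ℕ} (c : Fin k → ℝ) (e : Fin k → Fin M → ℂ) (f : Fin k → Fin N → ℂ)
    (he : ∀ i, star (e i) ⬝ᵥ e i = 1) (hf : ∀ i, star (f i) ⬝ᵥ f i = 1) :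
    (∑ i, (c i : ℂ) • outer (prodVec (e i) (f i))).trace = ((∑ i, c i : ℝ) : ℂ) := by
  rw [Matrix.trace_sum, Complex.ofReal_sum]
  refine Finset.sum_congr rfl fun i _ => ?_
  rw [Matrix.trace_smul, outer_trace, prodVec_norm _ _ (he i) (hf i)]
  simp

lemma sep_trace {M N : ℕ} {σ : Matrix (Fin M × Fin N) (Fin M × Fin N) ℂ} (h : IsSepOp σ) :
    ∃ t : ℝ, 0 ≤ t ∧ σ.trace = (t : ℂ) := by
  obtain ⟨k, c, e, f, hc, he, hf, hσ⟩ := h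
  exact ⟨∑ i, c i, Finset.sum_nonneg fun i _ => hc i, by rw [hσ, rep_trace c e f he hf]⟩

def Kdim (M N : ℕ) : ℕ :=
  Module.finrank ℝ (Matrix (Fin M × Fin N) (Fin M × Fin N) ℂ) + 1

lemma single_unit {M : ℕ} (hM : 0 < M) :
    star (Pi.single (⟨0, hM⟩ : Fin M) (1:ℂ)) ⬝ᵥ Pi.single (⟨0, hM⟩ : Fin M) (1:ℂ) = 1 := by
  simp [dotProduct, Pi.single_apply, apply_ite]

/-- Carathéodory-type bounded representation of separable operators. -/
lemma sep_rep {M N : ℕ} (hM : 0 < M) (hN : 0 < N)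
    {σ : Matrix (Fin M × Fin N) (Fin M × Fin N) ℂ} (h : IsSepOp σ) :
    ∃ (c : Fin (Kdim M N) → ℝ) (e : Fin (Kdim M N) → Fin M → ℂ)
      (f : Fin (Kdim M N) → Fin N → ℂ),
      (∀ i, 0 ≤ c i) ∧ (∀ i, star (e i) ⬝ᵥ e i = 1) ∧ (∀ i, star (f i) ⬝ᵥ f i = 1) ∧
      σ = ∑ i, (c i : ℂ) • outer (prodVec (e i) (f i)) := by
  classical
  obtain ⟨k, c, e, f, hc, he, hf, hσ⟩ := h
  set e₀ : Fin M → ℂ := Pi.single (⟨0, hM⟩ : Fin M) 1 with he₀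
  set f₀ : Fin N → ℂ := Pi.single (⟨0, hN⟩ : Fin N) 1 with hf₀
  rcases eq_or_lt_of_le (Finset.sum_nonneg fun i _ => hc i) with ht0 | ht
  · have hall : ∀ i, c i = 0 := by
      intro i
      have := (Finset.sum_eq_zero_iff_of_nonneg (fun i _ => hc i)).mp ht0.symm
      exact this i (Finset.mem_univ i)
    refine ⟨0, fun _ => e₀, fun _ => f₀, fun i => le_refl 0,
      fun _ => single_unit hM, fun _ => single_unit hN, ?_⟩
    simp only [Pi.zero_apply, Complex.ofReal_zero, zero_smul, Finset.sum_const_zero]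
    rw [hσ]
    exact Finset.sum_eq_zero fun i _ => by rw [hall i]; simp
  · set t : ℝ := ∑ i, c i with htdef
    set P : Set (Matrix (Fin M × Fin N) (Fin M × Fin N) ℂ) :=
      {A | ∃ u v, star u ⬝ᵥ u = 1 ∧ star v ⬝ᵥ v = 1 ∧ A = outer (prodVec u v)} with hP
    set z0 : Fin k → Matrix (Fin M × Fin N) (Fin M × Fin N) ℂ :=
      fun i => outer (prodVec (e i) (f i)) with hz0
    have hx : Finset.univ.centerMass c z0 ∈ convexHull ℝ P := by
      refine Finset.centerMass_mem_convexHull _ (fun i _ => hc i) ht fun i _ => ?_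
      exact ⟨e i, f i, he i, hf i, rfl⟩
    have hxσ : σ = t • Finset.univ.centerMass c z0 := by
      rw [Finset.centerMass, smul_smul, ← htdef, mul_inv_cancel₀ (ne_of_gt ht), one_smul, hσ]
      exact Finset.sum_congr rfl fun i _ => real_smul_mat (c i) (z0 i)
    obtain ⟨ι, hfin, z, w, hzP, hai, hw, hw1, hwz⟩ :=
      eq_pos_convex_span_of_mem_convexHull hx
    have hcard : Fintype.card ι ≤ Kdim M N := by
      refine le_trans (hai.card_le_finrank_succ) ?_
      exact Nat.add_le_add_right (Submodule.finrank_le _) 1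
    obtain ⟨g⟩ : Nonempty (ι ↪ Fin (Kdim M N)) := by
      rw [Function.Embedding.nonempty_iff_card_le, Fintype.card_fin]
      exact hcard
    choose u v hu hv hz using fun i => hzP (Set.mem_range_self i)
    set c' : Fin (Kdim M N) → ℝ := Function.extend g (fun i => t * w i) 0 with hc'
    set e' : Fin (Kdim M N) → Fin M → ℂ := Function.extend g u (fun _ => e₀) with he'
    set f' : Fin (Kdim M N) → Fin N → ℂ := Function.extend g v (fun _ => f₀) with hf'
    refine ⟨c', e', f', ?_, ?_, ?_, ?_⟩
    · intro j
      rw [hc', Function.extend_def]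
      split
      · next hj => exact mul_nonneg (le_of_lt ht) (le_of_lt (hw _))
      · exact le_refl 0
    · intro j
      rw [he', Function.extend_def]
      split
      · next hj => exact hu _
      · exact single_unit hM
    · intro j
      rw [hf', Function.extend_def]
      split
      · next hj => exact hv _
      · exact single_unit hN
    · have hvanish : ∀ j ∈ Finset.univ, j ∉ Finset.univ.image g →
          (c' j : ℂ) • outer (prodVec (e' j) (f' j)) = 0 := by
        intro j _ hj
        have : c' j = 0 := by
          rw [hc', Function.extend_def]
          split
          · next hex =>
            exact absurd (Finset.mem_image.mpr ⟨hex.choose, Finset.mem_univ _, hex.choose_spec⟩) hj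
          · rfl
        rw [this]; simp
      rw [← Finset.sum_subset (Finset.subset_univ (Finset.univ.image g)) hvanish,
        Finset.sum_image (fun a _ b _ hab => g.injective hab)]
      have hterm : ∀ i : ι, (c' (g i) : ℂ) • outer (prodVec (e' (g i)) (f' (g i)))
          = (t * w i) • z i := by
        intro i
        rw [hc', he', hf', g.injective.extend_apply, g.injective.extend_apply,
          g.injective.extend_apply, ← hz i, real_smul_mat]
      rw [Finset.sum_congr rfl fun i _ => hterm i, hxσ, ← hwz, Finset.smul_sum]
      exact Finset.sum_congr rfl fun i _ => by rw [smul_smul]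

/-! ### Compactness -/

abbrev XSp (M N K : ℕ) := (Fin K → ℝ) × (Fin K → Fin M → ℂ) × (Fin K → Fin N → ℂ)

def CSet (M N K : ℕ) : Set (XSp M N K) :=
  {x | (∀ i, 0 ≤ x.1 i) ∧ (∑ i, x.1 i) ≤ 1 ∧ (∀ i, star (x.2.1 i) ⬝ᵥ x.2.1 i = 1) ∧
    (∀ i, star (x.2.2 i) ⬝ᵥ x.2.2 i = 1)}

def Phi (M N K : ℕ) : XSp M N K → Matrix (Fin M × Fin N) (Fin M × Fin N) ℂ :=
  fun x => ∑ i, (x.1 i : ℂ) • outer (prodVec (x.2.1 i) (x.2.2 i))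

lemma unit_entry_le {m : ℕ} {u : Fin m → ℂ} (hu : star u ⬝ᵥ u = 1) (a : Fin m) :
    ‖u a‖ ≤ 1 := by
  have h1 : (∑ b, Complex.normSq (u b) : ℝ) = 1 := by
    have : star u ⬝ᵥ u = ((∑ b, Complex.normSq (u b) : ℝ) : ℂ) := by
      simp only [dotProduct, Pi.star_apply, Complex.ofReal_sum]
      exact Finset.sum_congr rfl fun b _ => by
        rw [RCLike.star_def, mul_comm, Complex.mul_conj]
    rw [this] at hu
    exact_mod_cast hu
  have h2 : Complex.normSq (u a) ≤ 1 := by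
    rw [← h1]
    exact Finset.single_le_sum (fun b _ => Complex.normSq_nonneg (u b)) (Finset.mem_univ a)
  have h3 : ‖u a‖ ^ 2 ≤ 1 := by rw [← Complex.sq_norm] at h2; exact h2
  nlinarith [norm_nonneg (u a)]

lemma isCompact_CSet (M N K : ℕ) : IsCompact (CSet M N K) := by
  have hbdd : CSet M N K ⊆ Metric.closedBall 0 1 := by
    intro x hx
    obtain ⟨h1, h2, h3, h4⟩ := hx
    rw [Metric.mem_closedBall, dist_zero_right]
    rw [Prod.norm_def]
    refine max_le ?_ ?_
    · refine (pi_norm_le_iff_of_nonneg zero_le_one).mpr fun i => ?_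
      rw [Real.norm_eq_abs, abs_of_nonneg (h1 i)]
      calc x.1 i ≤ ∑ j, x.1 j := Finset.single_le_sum (fun j _ => h1 j) (Finset.mem_univ i)
        _ ≤ 1 := h2
    · rw [Prod.norm_def]
      refine max_le ?_ ?_
      · exact (pi_norm_le_iff_of_nonneg zero_le_one).mpr fun i =>
          (pi_norm_le_iff_of_nonneg zero_le_one).mpr fun a => unit_entry_le (h3 i) a
      · exact (pi_norm_le_iff_of_nonneg zero_le_one).mpr fun i =>
          (pi_norm_le_iff_of_nonneg zero_le_one).mpr fun a => unit_entry_le (h4 i) a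
  have hclosed : IsClosed (CSet M N K) := by
    have hA : IsClosed {x : XSp M N K | ∀ i, 0 ≤ x.1 i} := by
      rw [Set.setOf_forall]
      refine isClosed_iInter fun i => isClosed_le continuous_const ?_
      exact (continuous_apply i).comp continuous_fst
    have hB : IsClosed {x : XSp M N K | (∑ i, x.1 i) ≤ 1} := by
      refine isClosed_le ?_ continuous_const
      exact continuous_finset_sum _ fun i _ => (continuous_apply i).comp continuous_fst
    have hC : IsClosed {x : XSp M N K | ∀ i, star (x.2.1 i) ⬝ᵥ x.2.1 i = 1} := by
      rw [Set.setOf_forall]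
      refine isClosed_iInter fun i => isClosed_eq ?_ continuous_const
      simp only [dotProduct, Pi.star_apply]
      refine continuous_finset_sum _ fun a _ => Continuous.mul ?_ ?_
      · exact continuous_star.comp ((continuous_apply a).comp
          ((continuous_apply i).comp (continuous_fst.comp continuous_snd)))
      · exact (continuous_apply a).comp
          ((continuous_apply i).comp (continuous_fst.comp continuous_snd))
    have hD : IsClosed {x : XSp M N K | ∀ i, star (x.2.2 i) ⬝ᵥ x.2.2 i = 1} := by
      rw [Set.setOf_forall]
      refine isClosed_iInter fun i => isClosed_eq ?_ continuous_const
      simp only [dotProduct, Pi.star_apply]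
      refine continuous_finset_sum _ fun a _ => Continuous.mul ?_ ?_
      · exact continuous_star.comp ((continuous_apply a).comp
          ((continuous_apply i).comp (continuous_snd.comp continuous_snd)))
      · exact (continuous_apply a).comp
          ((continuous_apply i).comp (continuous_snd.comp continuous_snd))
    have : CSet M N K = ({x : XSp M N K | ∀ i, 0 ≤ x.1 i} ∩ {x : XSp M N K | (∑ i, x.1 i) ≤ 1}) ∩
        ({x : XSp M N K | ∀ i, star (x.2.1 i) ⬝ᵥ x.2.1 i = 1} ∩
         {x : XSp M N K | ∀ i, star (x.2.2 i) ⬝ᵥ x.2.2 i = 1}) := by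
      ext x
      simp only [CSet, Set.mem_setOf_eq, Set.mem_inter_iff]
      tauto
    rw [this]
    exact (hA.inter hB).inter (hC.inter hD)
  exact (isCompact_closedBall (0 : XSp M N K) 1).of_isClosed_subset hclosed hbdd

lemma continuous_Phi (M N K : ℕ) : Continuous (Phi M N K) := by
  apply continuous_matrix
  intro p q
  have : (fun x : XSp M N K => Phi M N K x p q) = fun x =>
      ∑ i, (x.1 i : ℂ) * ((prodVec (x.2.1 i) (x.2.2 i) p) * star (prodVec (x.2.1 i) (x.2.2 i) q)) := by
    funext x
    simp [Phi, Matrix.sum_apply, outer, Matrix.vecMulVec_apply, mul_assoc]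
  rw [this]
  refine continuous_finset_sum _ fun i _ => Continuous.mul ?_ (Continuous.mul ?_ ?_)
  · exact Complex.continuous_ofReal.comp ((continuous_apply i).comp continuous_fst)
  · refine Continuous.mul ?_ ?_
    · exact (continuous_apply p.1).comp ((continuous_apply i).comp
        (continuous_fst.comp continuous_snd))
    · exact (continuous_apply p.2).comp ((continuous_apply i).comp
        (continuous_snd.comp continuous_snd))
  · refine continuous_star.comp (Continuous.mul ?_ ?_)
    · exact (continuous_apply q.1).comp ((continuous_apply i).comp
        (continuous_fst.comp continuous_snd))
    · exact (continuous_apply q.2).comp ((continuous_apply i).comp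
        (continuous_snd.comp continuous_snd))

/-- The set of separable operators with real trace at most one is the (compact) image of
`CSet` under `Phi`. -/
lemma sepSet_eq_image {M N : ℕ} (hM : 0 < M) (hN : 0 < N) :
    {σ : Matrix (Fin M × Fin N) (Fin M × Fin N) ℂ | IsSepOp σ ∧ σ.trace.re ≤ 1} =
      Phi M N (Kdim M N) '' CSet M N (Kdim M N) := by
  ext σ
  constructor
  · rintro ⟨hsep, htr⟩
    obtain ⟨c, e, f, hc, he, hf, hσ⟩ := sep_rep hM hN hsep
    have htrace : σ.trace = ((∑ i, c i : ℝ) : ℂ) := by rw [hσ, rep_trace c e f he hf]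
    have hsum : (∑ i, c i) ≤ 1 := by
      have : σ.trace.re = ∑ i, c i := by rw [htrace, Complex.ofReal_re]
      linarith [htr, this.symm.le, this.le]
    exact ⟨(c, e, f), ⟨hc, hsum, he, hf⟩, hσ.symm⟩
  · rintro ⟨x, ⟨h1, h2, h3, h4⟩, rfl⟩
    constructor
    · exact ⟨Kdim M N, x.1, x.2.1, x.2.2, h1, h3, h4, rfl⟩
    · have htrace : (Phi M N (Kdim M N) x).trace = ((∑ i, x.1 i : ℝ) : ℂ) :=
        rep_trace x.1 x.2.1 x.2.2 h3 h4
      rw [htrace, Complex.ofReal_re]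
      exact h2

/-- The set of `σ` with `ρ - σ` positive semidefinite is closed. -/
lemma isClosed_psd {n : Type*} [Fintype n] (ρ : Matrix n n ℂ) :
    IsClosed {A : Matrix n n ℂ | (ρ - A).PosSemidef} := by
  have hressub : Continuous fun A : Matrix n n ℂ => ρ - A := continuous_const.sub continuous_id
  have hherm : IsClosed {A : Matrix n n ℂ | (ρ - A).IsHermitian} := by
    exact isClosed_eq (hressub.matrix_conjTranspose) hressub
  have hquad : IsClosed {A : Matrix n n ℂ | ∀ x, 0 ≤ star x ⬝ᵥ (ρ - A) *ᵥ x} := by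
    rw [Set.setOf_forall]
    refine isClosed_iInter fun x => ?_
    have hg : Continuous fun A : Matrix n n ℂ => star x ⬝ᵥ (ρ - A) *ᵥ x :=
      (continuous_const : Continuous fun _ : Matrix n n ℂ => star x).dotProduct
        (hressub.matrix_mulVec continuous_const)
    have hle : IsClosed {z : ℂ | 0 ≤ z} := by
      have : {z : ℂ | 0 ≤ z} = Complex.re ⁻¹' Set.Ici 0 ∩ Complex.im ⁻¹' {0} := by
        ext z
        simp only [Set.mem_setOf_eq, Complex.le_def, Set.mem_inter_iff, Set.mem_preimage,
          Set.mem_Ici, Set.mem_singleton_iff, Complex.zero_re, Complex.zero_im]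
        exact and_congr Iff.rfl eq_comm
      rw [this]
      exact (isClosed_Ici.preimage Complex.continuous_re).inter
        (isClosed_singleton.preimage Complex.continuous_im)
    exact hle.preimage hg
  have : {A : Matrix n n ℂ | (ρ - A).PosSemidef} =
      {A : Matrix n n ℂ | (ρ - A).IsHermitian} ∩
      {A : Matrix n n ℂ | ∀ x, 0 ≤ star x ⬝ᵥ (ρ - A) *ᵥ x} :=
    Set.ext fun A => Matrix.posSemidef_iff_dotProduct_mulVec
  rw [this]
  exact hherm.inter hquad

lemma sep_zero {M N : ℕ} : IsSepOp (0 : Matrix (Fin M × Fin N) (Fin M × Fin N) ℂ) :=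
  ⟨0, Fin.elim0, Fin.elim0, Fin.elim0, fun i => i.elim0, fun i => i.elim0, fun i => i.elim0,
    by simp⟩

/-! ### Main theorem -/

/-- For any density matrix `ρ`, the supremum `Λ(ρ)` of `Tr σ` over separable positive
operators `σ` with `ρ − σ ≥ 0` is attained; moreover `0 ≤ Λ(ρ) ≤ 1`, and `Λ(ρ) = 1`
iff `ρ` is separable. -/
theorem stmt12 {M N : ℕ} (ρ : Matrix (Fin M × Fin N) (Fin M × Fin N) ℂ)
    (hρ : ρ.PosSemidef) (htr : ρ.trace = 1) :
    (∃ σ, IsSepOp σ ∧ (ρ - σ).PosSemidef ∧ σ.trace = (BSAlam ρ : ℂ)) ∧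
      0 ≤ BSAlam ρ ∧ BSAlam ρ ≤ 1 ∧ (BSAlam ρ = 1 ↔ IsSepOp ρ) := by
  classical
  -- the index types are nonempty
  have hMN : Nonempty (Fin M × Fin N) := by
    by_contra h
    rw [not_nonempty_iff] at h
    rw [Matrix.trace_eq_zero_of_isEmpty] at htr
    exact one_ne_zero htr.symm
  have hM : 0 < M := Fin.pos_iff_nonempty.mpr ⟨hMN.some.1⟩
  have hN : 0 < N := Fin.pos_iff_nonempty.mpr ⟨hMN.some.2⟩
  -- trace bound whenever ρ - σ is PSD
  have hbound : ∀ σ : Matrix (Fin M × Fin N) (Fin M × Fin N) ℂ,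
      (ρ - σ).PosSemidef → σ.trace.re ≤ 1 := by
    intro σ hpsd
    have h0 : 0 ≤ (ρ - σ).trace := psd_trace_nonneg hpsd
    have h1 : (ρ - σ).trace = 1 - σ.trace := by rw [Matrix.trace_sub, htr]
    rw [h1, Complex.le_def] at h0
    have := h0.1
    simp only [Complex.zero_re, Complex.sub_re, Complex.one_re] at this
    linarith
  -- the compact feasible set
  set KK := Phi M N (Kdim M N) '' CSet M N (Kdim M N) ∩
    {A : Matrix (Fin M × Fin N) (Fin M × Fin N) ℂ | (ρ - A).PosSemidef} with hKK
  have hKKcompact : IsCompact KK :=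
    (((isCompact_CSet M N (Kdim M N)).image (continuous_Phi M N (Kdim M N))).inter_right
      (isClosed_psd ρ))
  have hmem_iff : ∀ σ, σ ∈ KK ↔ IsSepOp σ ∧ (ρ - σ).PosSemidef := by
    intro σ
    constructor
    · rintro ⟨him, hpsd⟩
      have : IsSepOp σ ∧ σ.trace.re ≤ 1 :=
        (Set.ext_iff.mp (sepSet_eq_image hM hN) σ).mpr him
      exact ⟨this.1, hpsd⟩
    · rintro ⟨hsep, hpsd⟩
      refine ⟨?_, hpsd⟩
      exact (Set.ext_iff.mp (sepSet_eq_image hM hN) σ).mp ⟨hsep, hbound σ hpsd⟩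
  have hKKne : KK.Nonempty := by
    refine ⟨0, (hmem_iff 0).mpr ⟨sep_zero, ?_⟩⟩
    rw [sub_zero]; exact hρ
  -- maximize the (real part of the) trace
  obtain ⟨σs, hσsKK, hσsmax⟩ := hKKcompact.exists_isMaxOn hKKne
    ((Complex.continuous_re.comp (Continuous.matrix_trace continuous_id ..)).continuousOn)
  obtain ⟨hσssep, hσspsd⟩ := (hmem_iff σs).mp hσsKK
  obtain ⟨ts, hts0, htseq⟩ := sep_trace hσssep
  have htsre : σs.trace.re = ts := by rw [htseq, Complex.ofReal_re]
  -- the supremum set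
  set S := {t : ℝ | ∃ σ, IsSepOp σ ∧ (ρ - σ).PosSemidef ∧ σ.trace = (t : ℂ)} with hS
  have htsS : ts ∈ S := ⟨σs, hσssep, hσspsd, htseq⟩
  have hub : ∀ t ∈ S, t ≤ ts := by
    rintro t ⟨σ, hsep, hpsd, htr'⟩
    have hσKK : σ ∈ KK := (hmem_iff σ).mpr ⟨hsep, hpsd⟩
    have h2 : σ.trace.re ≤ σs.trace.re := hσsmax hσKK
    rw [htr', Complex.ofReal_re, htsre] at h2
    exact h2
  have hbddS : BddAbove S := ⟨ts, hub⟩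
  have hSne : S.Nonempty := ⟨ts, htsS⟩
  have hlam : BSAlam ρ = ts := le_antisymm (csSup_le hSne hub) (le_csSup hbddS htsS)
  have h0S : (0 : ℝ) ∈ S := ⟨0, sep_zero, by rw [sub_zero]; exact hρ, by simp⟩
  have hlam_le : BSAlam ρ ≤ 1 := by
    rw [hlam, ← htsre]
    exact hbound σs hσspsd
  refine ⟨⟨σs, hσssep, hσspsd, by rw [hlam, htseq]⟩, ?_, hlam_le, ?_⟩
  · rw [hlam]
    exact hub 0 h0S
  · constructor
    · intro h1
      have hts1 : ts = 1 := by rw [← hlam, h1]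
      have htrσs : σs.trace = 1 := by rw [htseq, hts1, Complex.ofReal_one]
      have : (ρ - σs).trace = 0 := by rw [Matrix.trace_sub, htr, htrσs, sub_self]
      have := psd_trace_eq_zero hσspsd this
      have hρσ : ρ = σs := by
        have := sub_eq_zero.mp this
        exact this
      rw [hρσ]
      exact hσssep
    · intro hsep
      have h1S : (1 : ℝ) ∈ S := ⟨ρ, hsep, by rw [sub_self]; exact Matrix.PosSemidef.zero, by
        rw [htr]; simp⟩
      have := le_csSup hbddS h1S
      exact le_antisymm hlam_le this
end
end
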